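/- Let G be a (weakly connected) digraph, and x, y chip-distributions such that there exists f ∈ ℕ^V with y = x + Lf. Suppose that for each strongly connected component of G, with vertex set V' and induced sub-digraph G', either f restricted to V' is the zero vector, or y restricted to V' is a recurrent chip-distribution on G'. Then x ⤳ y. -/

import Mathlib

/-!
Induct on `∑ f`. Choose `w` in the support of `f` minimal for reachability and let `C` be its
strongly connected component, so that every in-neighbour of `C` outside `C` has `f = 0`. Since
`y|C` is recurrent and `C` is strongly connected, the firing vector of its cycle is a positive
period vector; repeating the cycle gives a legal game on `C` firing each `v ∈ C` at least `f v`
times. Inside that game some `v` with `f v ≠ 0` is fired while holding no more chips than in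
`y - L_C f|C`, so it can fire there and, as its in-neighbours outside `C` do not fire, also in
`x = y - L f`. Fire `v` and continue with `f - 1_v`.
-/

namespace ChipFiring

variable {V : Type*}

/-- Out-degree of a vertex: total multiplicity of edges leaving `v`. -/
def outdeg [Fintype V] (d : V → V → ℕ) (v : V) : ℕ := ∑ u, d v u

/-- In-degree of a vertex: total multiplicity of edges entering `v`. -/
def indeg [Fintype V] (d : V → V → ℕ) (v : V) : ℕ := ∑ u, d u v

/-- A digraph (multiplicity function) has no loops. -/
def Loopless (d : V → V → ℕ) : Prop := ∀ v, d v v = 0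

/-- Weak connectivity: each pair of vertices is joined by an undirected walk. -/
def WeaklyConnected (d : V → V → ℕ) : Prop :=
  ∀ u v : V, Relation.ReflTransGen (fun a b => d a b ≠ 0 ∨ d b a ≠ 0) u v

/-- Strong connectivity: each ordered pair of vertices is joined by a directed walk. -/
def StronglyConnected (d : V → V → ℕ) : Prop :=
  ∀ u v : V, Relation.ReflTransGen (fun a b => d a b ≠ 0) u v

/-- Eulerian: out-degree equals in-degree at each vertex. -/
def Eulerian [Fintype V] (d : V → V → ℕ) : Prop := ∀ v, outdeg d v = indeg d v

/-- The Laplacian matrix: `L(u,u) = -d⁺(u)`, and `L(u,v) = d(v,u)` for `u ≠ v`. -/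
def laplacian [Fintype V] [DecidableEq V] (d : V → V → ℕ) : Matrix V V ℤ :=
  fun u v => if u = v then -(outdeg d v : ℤ) else (d v u : ℤ)

/-- Firing vertex `v`: `v` sends one chip along each outgoing edge. -/
def fire [Fintype V] [DecidableEq V] (d : V → V → ℕ) (x : V → ℕ) (v : V) : V → ℕ :=
  fun u => if u = v then x v - outdeg d v else x u + d v u

/-- `LegalSeq d x α` : the sequence of firings `α` is legal from initial distribution `x`. -/
def LegalSeq [Fintype V] [DecidableEq V] (d : V → V → ℕ) : (V → ℕ) → List V → Prop
  | _, [] => True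
  | x, v :: rest => outdeg d v ≤ x v ∧ LegalSeq d (fire d x v) rest

/-- The chip-distribution obtained from `x` after performing the firings `α`. -/
def runGame [Fintype V] [DecidableEq V] (d : V → V → ℕ) : (V → ℕ) → List V → (V → ℕ)
  | x, [] => x
  | x, v :: rest => runGame d (fire d x v) rest

/-- The firing vector of a game: how many times each vertex is fired. -/
def firingVector [DecidableEq V] (α : List V) : V → ℕ := fun v => α.count v

/-- `x ⤳ y` : some legal game transforms `x` into `y`. -/
def Reaches [Fintype V] [DecidableEq V] (d : V → V → ℕ) (x y : V → ℕ) : Prop :=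
  ∃ α : List V, LegalSeq d x α ∧ runGame d x α = y

/-- A period vector: a nonnegative integer vector in the kernel of the Laplacian. -/
def PeriodVector [Fintype V] [DecidableEq V] (d : V → V → ℕ) (p : V → ℕ) : Prop :=
  (laplacian d).mulVec (fun v => (p v : ℤ)) = 0

/-- A vector `f ∈ ℕ^V` is reduced if `f ≥ p` fails for every nonzero period vector `p`. -/
def Reduced [Fintype V] [DecidableEq V] (d : V → V → ℕ) (f : V → ℕ) : Prop :=
  ∀ p : V → ℕ, PeriodVector d p → p ≠ 0 → ¬ (∀ v, p v ≤ f v)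

/-- A distribution is recurrent if a nonempty legal game transforms it back to itself. -/
def Recurrent [Fintype V] [DecidableEq V] (d : V → V → ℕ) (x : V → ℕ) : Prop :=
  ∃ α : List V, α ≠ [] ∧ LegalSeq d x α ∧ runGame d x α = x

/-- Linear equivalence: `x = y + Lz` for some integer vector `z`. -/
def LinEquiv [Fintype V] [DecidableEq V] (d : V → V → ℕ) (x y : V → ℕ) : Prop :=
  ∃ z : V → ℤ, ∀ v, (x v : ℤ) = (y v : ℤ) + (laplacian d).mulVec z v

/-- `x` is non-terminating: there is an infinite sequence of legal firings from `x`. -/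
def NonTerminating [Fintype V] [DecidableEq V] (d : V → V → ℕ) (x : V → ℕ) : Prop :=
  ∃ s : ℕ → V, ∀ n : ℕ, LegalSeq d x (List.ofFn (fun i : Fin n => s i))

end ChipFiring

namespace ChipFiring

open Finset Matrix Relation

variable {V : Type*}

section Components

variable (d : V → V → ℕ)

abbrev Reach : V → V → Prop := ReflTransGen fun a b => d a b ≠ 0

abbrev SameComponent (w u : V) : Prop := Reach d w u ∧ Reach d u w

abbrev induce (p : V → Prop) : Subtype p → Subtype p → ℕ := fun a b => d a b

variable {d}

lemma reach_induce_of_reach {w a b : V} (ha : SameComponent d w a) (hb : SameComponent d w b)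
    (hab : Reach d a b) : Reach (induce d (SameComponent d w)) ⟨a, ha⟩ ⟨b, hb⟩ := by
  induction hab with
  | refl => rfl
  | @tail c b _ hcb ih =>
    exact (ih ⟨ha.1.trans ‹_›, .head hcb hb.2⟩).tail hcb

lemma stronglyConnected_induce_sameComponent (w : V) :
    StronglyConnected (induce d (SameComponent d w)) := fun a b =>
  reach_induce_of_reach a.2 b.2 (a.2.2.trans b.2.1)

lemma exists_minimal_support [Finite V] {f : V → ℕ} (hf : f ≠ 0) :
    ∃ w, f w ≠ 0 ∧ ∀ u, f u ≠ 0 → Reach d u w → Reach d w u := by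
  obtain ⟨w, hw, hmin⟩ := Set.Finite.exists_minimalFor (fun u => {z | Reach d z u})
    {u | f u ≠ 0} (Set.toFinite _) (Function.ne_iff.1 hf)
  exact ⟨w, hw, fun u hu huw =>
    hmin hu (fun z hz => hz.trans huw) (ReflTransGen.refl : Reach d w w)⟩

end Components

section Laplacian

variable [Fintype V] [DecidableEq V] (d : V → V → ℕ)

lemma laplacian_mulVec_apply (h : V → ℤ) (v : V) :
    (laplacian d *ᵥ h) v = ∑ u ∈ univ.erase v, (d u v : ℤ) * h u - outdeg d v * h v := by
  rw [mulVec, dotProduct, ← add_sum_erase _ _ (mem_univ v), sum_congr rfl fun u hu =>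
    by rw [laplacian, if_neg (ne_of_mem_erase hu).symm]]
  simp only [laplacian, ↓reduceIte]
  ring

lemma laplacian_mulVec_nonneg_of_eq_zero {h : V → ℤ} (hh : ∀ u, 0 ≤ h u) {v : V}
    (hv : h v = 0) : 0 ≤ (laplacian d *ᵥ h) v := by
  rw [laplacian_mulVec_apply, hv, mul_zero, sub_zero]
  exact sum_nonneg fun u _ => mul_nonneg (Nat.cast_nonneg _) (hh u)

lemma cast_fire {x : V → ℕ} {v : V} (hv : outdeg d v ≤ x v) (u : V) :
    (fire d x v u : ℤ) = x u + laplacian d u v := by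
  by_cases hu : u = v
  · subst hu
    simp [fire, laplacian, Nat.cast_sub hv, sub_eq_add_neg]
  · simp [fire, laplacian, hu]

omit [Fintype V] in
lemma firingVector_cons (v : V) (α : List V) :
    firingVector (v :: α) = firingVector α + Pi.single v 1 := by
  ext u
  by_cases h : u = v
  · simp [firingVector, h]
  · simp [firingVector, h, Ne.symm h]

lemma runGame_append (x : V → ℕ) (α β : List V) :
    runGame d x (α ++ β) = runGame d (runGame d x α) β := by
  induction α generalizing x with
  | nil => rfl
  | cons v α ih => exact ih _

lemma legalSeq_append {x : V → ℕ} {α β : List V} :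
    LegalSeq d x (α ++ β) ↔ LegalSeq d x α ∧ LegalSeq d (runGame d x α) β := by
  induction α generalizing x with
  | nil => simp [LegalSeq, runGame]
  | cons v α ih => simp only [List.cons_append, LegalSeq, ih, runGame, and_assoc]

lemma cast_runGame {x : V → ℕ} {α : List V} (hα : LegalSeq d x α) (u : V) :
    (runGame d x α u : ℤ) = x u + (laplacian d *ᵥ fun w => (firingVector α w : ℤ)) u := by
  induction α generalizing x with
  | nil => simp [runGame, firingVector, ← Pi.zero_def]
  | cons v α ih =>
    rw [runGame, ih hα.2, cast_fire d hα.1, firingVector_cons]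
    have : (fun w => ((firingVector α + Pi.single v 1 : V → ℕ) w : ℤ))
        = (fun w => (firingVector α w : ℤ)) + Pi.single v 1 := by
      ext w; simp [Pi.single_apply]
    rw [this, mulVec_add, mulVec_single_one]
    simp only [Pi.add_apply, col_apply]
    ring

end Laplacian

section Recurrence

variable [Fintype V] [DecidableEq V] {d : V → V → ℕ}

lemma periodVector_firingVector {y : V → ℕ} {β : List V} (hβ : LegalSeq d y β)
    (hy : runGame d y β = y) : PeriodVector d (firingVector β) := by
  ext u
  have := cast_runGame d hβ u
  rw [hy] at this
  simpa using this.symm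

lemma PeriodVector.pos (hloop : Loopless d) (hsc : StronglyConnected d) {p : V → ℕ}
    (hp : PeriodVector d p) {v₀ : V} (h₀ : p v₀ ≠ 0) (u : V) : 0 < p u := by
  induction hsc v₀ u with
  | refl => exact Nat.pos_of_ne_zero h₀
  | @tail b c _ hbc hb =>
    by_contra! hc
    have hbc' : b ≠ c := fun h => hbc (h ▸ hloop b)
    have hLc := congrFun hp c
    rw [laplacian_mulVec_apply, Nat.le_zero.1 hc, Nat.cast_zero, mul_zero, sub_zero,
      Pi.zero_apply] at hLc
    have hle : (d b c : ℤ) * p b ≤ ∑ u ∈ univ.erase c, (d u c : ℤ) * p u :=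
      single_le_sum (f := fun u => (d u c : ℤ) * p u) (fun _ _ => by positivity)
        (mem_erase.2 ⟨hbc', mem_univ b⟩)
    have hpos : 0 < (d b c : ℤ) * p b := by positivity
    omega

lemma exists_cycle_firingVector_eq_mul {y : V → ℕ} {β : List V} (hβ : LegalSeq d y β)
    (hy : runGame d y β = y) (k : ℕ) :
    ∃ γ, LegalSeq d y γ ∧ runGame d y γ = y ∧
      ∀ u, firingVector γ u = k * firingVector β u := by
  induction k with
  | zero => exact ⟨[], trivial, rfl, by simp [firingVector]⟩
  | succ k ih =>
    obtain ⟨γ, hγ, hγy, hγβ⟩ := ih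
    refine ⟨β ++ γ, (legalSeq_append d).2 ⟨hβ, by rwa [hy]⟩,
      by rw [runGame_append, hy, hγy], fun u => ?_⟩
    simp only [firingVector, List.count_append] at hγβ ⊢
    rw [hγβ]
    ring

lemma Recurrent.exists_cycle_firingVector_ge (hloop : Loopless d) (hsc : StronglyConnected d)
    {y : V → ℕ} (hy : Recurrent d y) (g : V → ℕ) :
    ∃ γ, LegalSeq d y γ ∧ runGame d y γ = y ∧ g ≤ firingVector γ := by
  obtain ⟨β, hβne, hβ, hβy⟩ := hy
  obtain ⟨γ, hγ, hγy, hγβ⟩ := exists_cycle_firingVector_eq_mul hβ hβy (∑ u, g u)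
  refine ⟨γ, hγ, hγy, fun u => ?_⟩
  have hpos := (periodVector_firingVector hβ hβy).pos hloop hsc
    (v₀ := β.head hβne) (List.count_pos_iff.2 (List.head_mem hβne)).ne' u
  calc g u ≤ ∑ u, g u := single_le_sum (fun _ _ => Nat.zero_le _) (mem_univ u)
    _ ≤ (∑ u, g u) * firingVector β u := Nat.le_mul_of_pos_right _ hpos
    _ = firingVector γ u := (hγβ u).symm

/-- Take the first firing in `γ` of a vertex `a` that has exactly `g a` firings left: at that
moment the distribution is `runGame d z γ - L c` with `g ≤ c` and `c a = g a`, and it can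
fire `a`. -/
lemma exists_fireable_of_le_firingVector {z : V → ℕ} {γ : List V} (hγ : LegalSeq d z γ)
    {g : V → ℕ} (hg : g ≤ firingVector γ) (hg₀ : g ≠ 0) :
    ∃ v, g v ≠ 0 ∧
      (outdeg d v : ℤ) ≤ runGame d z γ v - (laplacian d *ᵥ fun u => (g u : ℤ)) v := by
  induction γ generalizing z with
  | nil => exact absurd (le_antisymm hg fun u => Nat.zero_le _) hg₀
  | cons a γ ih =>
    by_cases hga : firingVector (a :: γ) a ≤ g a
    · refine ⟨a, (List.count_pos_iff.2 List.mem_cons_self).trans_le hga |>.ne', ?_⟩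
      have hc := laplacian_mulVec_nonneg_of_eq_zero d (v := a)
        (h := (fun u => (firingVector (a :: γ) u : ℤ)) - fun u => (g u : ℤ))
        (fun u => by simp [hg u]) (by simp [le_antisymm (hg a) hga])
      rw [mulVec_sub, Pi.sub_apply] at hc
      have hrun := cast_runGame d hγ a
      have hza : (outdeg d a : ℤ) ≤ z a := by exact_mod_cast hγ.1
      linarith
    · have hg' : g ≤ firingVector γ := fun u => by
        have := hg u
        by_cases hu : u = a
        · subst hu
          simp only [firingVector_cons, Pi.add_apply, Pi.single_eq_same] at this hga
          exact Nat.le_of_lt_succ (not_le.1 hga)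
        · simpa [firingVector_cons, hu] using this
      exact ih hγ.2 hg'

end Recurrence

section Induce

variable [Fintype V] {d : V → V → ℕ} {p : V → Prop} [Fintype (Subtype p)]

lemma outdeg_induce_le (v : Subtype p) : outdeg (induce d p) v ≤ outdeg d v := by
  classical
  rw [outdeg, outdeg, ← sum_subtype (univ.filter p) (by simp) (fun u => d v u)]
  exact sum_le_sum_of_subset (filter_subset _ _)

variable [DecidableEq V] [DecidableEq (Subtype p)]

lemma laplacian_mulVec_add_outdeg_induce {h : V → ℤ} {v : Subtype p}
    (hh : ∀ u, ¬ p u → d u v ≠ 0 → h u = 0) :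
    (laplacian (induce d p) *ᵥ fun u => h u) v + outdeg (induce d p) v * h v
      = (laplacian d *ᵥ h) v + outdeg d v * h v := by
  classical
  simp only [laplacian_mulVec_apply, sub_add_cancel, sum_erase_eq_sub (mem_univ _)]
  congr 1
  rw [← sum_filter_of_ne (p := p) fun u _ hu => ?_, sum_subtype (p := p) (univ.filter p) (by simp)
    (fun u => (d u v : ℤ) * h u)]
  by_contra hpu
  exact hu (by rw [hh u hpu fun h0 => hu (by simp [h0]), mul_zero])

end Induce

section Reaches

variable [Fintype V] [DecidableEq V] {d : V → V → ℕ}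

open scoped Classical in
lemma exists_fireable_of_recurrent_on_support (hloop : Loopless d) {x y f : V → ℕ}
    (hy : ∀ v, (y v : ℤ) = x v + (laplacian d *ᵥ fun u => (f u : ℤ)) v)
    (hrec : ∀ w, f w ≠ 0 → Recurrent (induce d (SameComponent d w)) fun u => y u)
    (hf : f ≠ 0) : ∃ v, f v ≠ 0 ∧ outdeg d v ≤ x v := by
  obtain ⟨w, hw, hmin⟩ := exists_minimal_support hf
  obtain ⟨γ, hγ, hγy, hfγ⟩ := (hrec w hw).exists_cycle_firingVector_ge (fun u => hloop u.1)
    (stronglyConnected_induce_sameComponent w) fun u => f u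
  obtain ⟨v, hv, hvy⟩ := exists_fireable_of_le_firingVector hγ hfγ
    (Function.ne_iff.2 ⟨⟨w, .refl, .refl⟩, hw⟩)
  have hsupp : ∀ u, ¬ SameComponent d w u → d u v ≠ 0 → (f u : ℤ) = 0 := by
    intro u hu huv
    have huw : Reach d u w :=
      (ReflTransGen.single (r := fun a b => d a b ≠ 0) huv).trans v.2.2
    by_contra hfu
    exact hu ⟨hmin u (by exact_mod_cast hfu) huw, huw⟩
  have hL := laplacian_mulVec_add_outdeg_induce hsupp
  have hout : (outdeg (induce d (SameComponent d w)) v : ℤ) ≤ outdeg d v := by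
    exact_mod_cast outdeg_induce_le v
  have hfv : (1 : ℤ) ≤ f v := by exact_mod_cast Nat.one_le_iff_ne_zero.2 hv
  rw [hγy] at hvy
  have hyv := hy v
  have hslack : (0 : ℤ) ≤ (outdeg d v - outdeg (induce d (SameComponent d w)) v) * (f v - 1) :=
    mul_nonneg (by linarith) (by linarith)
  refine ⟨v, hv, ?_⟩
  have hxv : (outdeg d v : ℤ) ≤ x v := by linarith
  exact_mod_cast hxv

open scoped Classical in
lemma reaches_of_recurrent_on_support (hloop : Loopless d) {x y f : V → ℕ}
    (hy : ∀ v, (y v : ℤ) = x v + (laplacian d *ᵥ fun u => (f u : ℤ)) v)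
    (hrec : ∀ w, f w ≠ 0 → Recurrent (induce d (SameComponent d w)) fun u => y u) :
    Reaches d x y := by
  induction hN : ∑ v, f v using Nat.strong_induction_on generalizing x f with
  | _ N ih =>
  by_cases hf : f = 0
  · refine ⟨[], trivial, funext fun v => ?_⟩
    have := hy v
    simp only [hf, Pi.zero_apply, Nat.cast_zero, ← Pi.zero_def, mulVec_zero, add_zero] at this
    exact_mod_cast this.symm
  obtain ⟨v, hv, hvx⟩ := exists_fireable_of_recurrent_on_support hloop hy hrec hf
  set f' := f - Pi.single v 1
  have hf' : (fun u => (f u : ℤ)) = (fun u => (f' u : ℤ)) + Pi.single v 1 := by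
    ext u
    by_cases hu : u = v
    · subst hu; simp [f']; omega
    · simp [f', hu]
  have hy' : ∀ u, (y u : ℤ) = fire d x v u + (laplacian d *ᵥ fun u => (f' u : ℤ)) u := by
    intro u
    rw [hy u, hf', mulVec_add, mulVec_single_one, cast_fire d hvx]
    simp only [Pi.add_apply, col_apply]
    ring
  have hlt : ∑ u, f' u < N := hN ▸ sum_lt_sum (fun u _ => Nat.sub_le _ _)
    ⟨v, mem_univ v, by simp [f']; omega⟩
  obtain ⟨α, hα, hαy⟩ := ih _ hlt hy' (fun w hw => hrec w fun h => hw (by simp [f', h])) rfl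
  exact ⟨v :: α, ⟨hvx, hα⟩, hαy⟩

end Reaches

end ChipFiring

namespace ChipFiring

open scoped Classical in
theorem reaches_of_componentwise_recurrent_general {V : Type*} [Fintype V] [DecidableEq V]
    (d : V → V → ℕ) (hloop : Loopless d)
    (x y f : V → ℕ)
    (hy : ∀ v, (y v : ℤ) = (x v : ℤ) + (laplacian d).mulVec (fun u => (f u : ℤ)) v)
    (hcomp : ∀ w : V,
      (∀ u : {u : V // Relation.ReflTransGen (fun a b => d a b ≠ 0) w u ∧
          Relation.ReflTransGen (fun a b => d a b ≠ 0) u w}, f u.1 = 0) ∨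
      Recurrent
        (fun a b : {u : V // Relation.ReflTransGen (fun a b => d a b ≠ 0) w u ∧
            Relation.ReflTransGen (fun a b => d a b ≠ 0) u w} => d a.1 b.1)
        (fun u => y u.1)) :
    Reaches d x y := by
  refine reaches_of_recurrent_on_support hloop hy fun w hw => ?_
  rcases hcomp w with hzero | hrec
  · exact absurd (hzero ⟨w, .refl, .refl⟩) hw
  · exact hrec

open scoped Classical in
/-- Let `G` be a weakly connected digraph and `x, y` chip-distributions
with `y = x + Lf` for some `f ∈ ℕ^V`. If for each strongly connected component (here: the
strongly connected component of each vertex `w`, viewed as an induced sub-digraph on the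
subtype of vertices mutually reachable with `w`), either `f` restricted to the component
is zero, or `y` restricted to the component is recurrent on the induced sub-digraph,
then `x ⤳ y`. -/
theorem reaches_of_componentwise_recurrent {V : Type*} [Fintype V] [DecidableEq V]
    (d : V → V → ℕ) (hloop : Loopless d) (hconn : WeaklyConnected d)
    (x y f : V → ℕ)
    (hy : ∀ v, (y v : ℤ) = (x v : ℤ) + (laplacian d).mulVec (fun u => (f u : ℤ)) v)
    (hcomp : ∀ w : V,
      (∀ u : {u : V // Relation.ReflTransGen (fun a b => d a b ≠ 0) w u ∧
          Relation.ReflTransGen (fun a b => d a b ≠ 0) u w}, f u.1 = 0) ∨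
      Recurrent
        (fun a b : {u : V // Relation.ReflTransGen (fun a b => d a b ≠ 0) w u ∧
            Relation.ReflTransGen (fun a b => d a b ≠ 0) u w} => d a.1 b.1)
        (fun u => y u.1)) :
    Reaches d x y :=
  reaches_of_componentwise_recurrent_general d hloop x y f hy hcomp

end ChipFiring
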